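/- Let q, β, t be complex numbers with |q| < 1, |β| < 1, and |t| < 1, and let θ be a real number. Then Σ_{n=0}^{∞} (1 − β q^n) C_n(cos θ; β|q) t^n = [(β t q e^{iθ};q)_∞ (β t q e^{−iθ};q)_∞ / ((t e^{iθ};q)_∞ (t e^{−iθ};q)_∞)] · (1 − β)(1 − β t²), the series converging absolutely. -/

import Mathlib

/-- Finite q-Pochhammer symbol `(a;q)_n`. -/
noncomputable def qp (q a : ℂ) (n : ℕ) : ℂ := ∏ k ∈ Finset.range n, (1 - a * q ^ k)

/-- Infinite q-Pochhammer symbol `(a;q)_∞`. -/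
noncomputable def qpi (q a : ℂ) : ℂ := ∏' k : ℕ, (1 - a * q ^ k)

/-- Real finite q-Pochhammer symbol. -/
noncomputable def qpR (q a : ℝ) (n : ℕ) : ℝ := ∏ k ∈ Finset.range n, (1 - a * q ^ k)

/-- The q-functions `C_n^{(α,β)}(e^{iθ};q)`; for `α = β` these are the continuous
q-ultraspherical polynomials `C_n(cos θ; β | q)`. -/
noncomputable def Cab (q α β : ℂ) (n : ℕ) (θ : ℝ) : ℂ :=
  ∑ k ∈ Finset.range (n + 1),
    qp q α k * qp q β (n - k) / (qp q q k * qp q q (n - k)) *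
      Complex.exp (Complex.I * ((n : ℂ) - 2 * (k : ℂ)) * (θ : ℂ))

/-- The weight function `ω^{(α,β)}(cos θ | q)`; for `α = β` this is `ω_β(cos θ | q)`. -/
noncomputable def wab (q α β : ℂ) (θ : ℝ) : ℂ :=
  qpi q (Complex.exp (2 * Complex.I * (θ : ℂ))) *
      qpi q (Complex.exp (-(2 * Complex.I * (θ : ℂ)))) /
    (qpi q (α * Complex.exp (2 * Complex.I * (θ : ℂ))) *
      qpi q (β * Complex.exp (-(2 * Complex.I * (θ : ℂ)))))

/-- The normalization constant `h_n(β|q)`. -/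
noncomputable def hcst (q β : ℂ) (n : ℕ) : ℂ :=
  qpi q q * qpi q (β ^ 2) * qp q q n * (1 - β * q ^ n) /
    (2 * (Real.pi : ℂ) * (qpi q β * qpi q (β * q) * qp q (β ^ 2) n * (1 - β)))

/-- The homogeneous polynomials `Φ_n^{(a,b)}(x, y | q)`. -/
noncomputable def Phi (q a b : ℂ) (n : ℕ) (x y : ℂ) : ℂ :=
  ∑ k ∈ Finset.range (n + 1),
    qp q q n / (qp q q k * qp q q (n - k)) * qp q a k * qp q b (n - k) * x ^ k * y ^ (n - k)

/-- The Jackson q-integral `∫_a^b f(z) d_q z`. -/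
noncomputable def jackson (q a b : ℂ) (f : ℂ → ℂ) : ℂ :=
  (1 - q) * b * ∑' n : ℕ, q ^ n * f (b * q ^ n) -
    (1 - q) * a * ∑' n : ℕ, q ^ n * f (a * q ^ n)

/-!
Write `S(x) = ∑ₖ (β;q)ₖ/(q;q)ₖ xᵏ`. Comparing coefficients gives `S(x)(1 - x) = S(qx)(1 - βx)`;
iterating `n` times and letting `n → ∞`, where `S(qⁿx) → S(0) = 1`, yields the q-binomial theorem
`S(x) = (βx;q)_∞/(x;q)_∞`. The Cauchy product of the series at `u = te^{-iθ}` and `v = te^{iθ}` is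
`G(t) = ∑ₙ Cₙ tⁿ`, so `G(t)` is a quotient of four infinite products, and the sum in question is
`G(t) - βG(qt)`. Splitting off the first factor of each product in `G(t)` reduces this to
`(1 - βu)(1 - βv) - β(1 - u)(1 - v) = (1 - β)(1 - βuv)` with `uv = t²`.
-/

open Filter Topology

lemma norm_mul_lt_one_of_le_one_of_lt_one {a b : ℂ} (ha : ‖a‖ ≤ 1) (hb : ‖b‖ < 1) :
    ‖a * b‖ < 1 := by
  rw [norm_mul]; exact (mul_le_of_le_one_left (norm_nonneg b) ha).trans_lt hb

lemma norm_mul_lt_one_of_lt_one_of_le_one {a b : ℂ} (ha : ‖a‖ < 1) (hb : ‖b‖ ≤ 1) :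
    ‖a * b‖ < 1 := by
  rw [mul_comm]; exact norm_mul_lt_one_of_le_one_of_lt_one hb ha

section QPochhammer

variable {q : ℂ}

lemma summable_norm_mul_pow (hq : ‖q‖ < 1) (a : ℂ) : Summable fun k : ℕ => ‖a * q ^ k‖ := by
  simpa [norm_mul, norm_pow] using (summable_geometric_of_lt_one (norm_nonneg q) hq).mul_left ‖a‖

lemma one_sub_mul_pow_ne_zero (hq : ‖q‖ ≤ 1) {a : ℂ} (ha : ‖a‖ < 1) (k : ℕ) :
    1 - a * q ^ k ≠ 0 := by
  have hlt : ‖a * q ^ k‖ < 1 :=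
    norm_mul_lt_one_of_lt_one_of_le_one ha (by rw [norm_pow]; exact pow_le_one₀ (norm_nonneg q) hq)
  intro h
  exact hlt.ne (by rw [← sub_eq_zero.mp h, norm_one])

lemma multipliable_one_sub_mul_pow (hq : ‖q‖ < 1) (a : ℂ) :
    Multipliable fun k : ℕ => 1 - a * q ^ k := by
  simpa [sub_eq_add_neg] using
    multipliable_one_add_of_summable (f := fun k : ℕ => -(a * q ^ k))
      (by simpa using summable_norm_mul_pow hq a)

lemma tendsto_qp_qpi (hq : ‖q‖ < 1) (a : ℂ) : Tendsto (qp q a) atTop (𝓝 (qpi q a)) :=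
  (multipliable_one_sub_mul_pow hq a).hasProd.tendsto_prod_nat

lemma qpi_ne_zero (hq : ‖q‖ < 1) {a : ℂ} (ha : ‖a‖ < 1) : qpi q a ≠ 0 := by
  simpa [qpi, sub_eq_add_neg] using
    tprod_one_add_ne_zero_of_summable (f := fun k : ℕ => -(a * q ^ k))
      (fun k => by simpa [sub_eq_add_neg] using one_sub_mul_pow_ne_zero hq.le ha k)
      (by simpa using summable_norm_mul_pow hq a)

lemma qp_succ (q a : ℂ) (n : ℕ) : qp q a (n + 1) = qp q a n * (1 - a * q ^ n) :=
  Finset.prod_range_succ _ _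

lemma qp_succ' (q a : ℂ) (n : ℕ) : qp q a (n + 1) = (1 - a) * qp q (a * q) n := by
  simp only [qp, Finset.prod_range_succ', pow_zero, mul_one, pow_succ, mul_assoc,
    mul_comm (q ^ _) q]
  ring

lemma qpi_eq_one_sub_mul_qpi (hq : ‖q‖ < 1) (a : ℂ) : qpi q a = (1 - a) * qpi q (a * q) := by
  have h := (tendsto_qp_qpi hq a).comp (tendsto_add_atTop_nat 1)
  simp only [Function.comp_def, qp_succ'] at h
  exact tendsto_nhds_unique h ((tendsto_qp_qpi hq (a * q)).const_mul _)

end QPochhammer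

section QBinomial

variable {q : ℂ}

noncomputable def qBinomialCoeff (q β : ℂ) (k : ℕ) : ℂ := qp q β k / qp q q k

noncomputable def qBinomialSeries (q β x : ℂ) : ℂ := ∑' k : ℕ, qBinomialCoeff q β k * x ^ k

lemma qBinomialCoeff_zero (q β : ℂ) : qBinomialCoeff q β 0 = 1 := by
  simp [qBinomialCoeff, qp]

lemma qBinomialCoeff_succ_mul (hq : ‖q‖ < 1) (β : ℂ) (k : ℕ) :
    qBinomialCoeff q β (k + 1) * (1 - q ^ (k + 1)) = qBinomialCoeff q β k * (1 - β * q ^ k) := by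
  have hqk : 1 - q ^ (k + 1) ≠ 0 := by
    simpa [pow_succ'] using one_sub_mul_pow_ne_zero hq.le hq k
  rw [qBinomialCoeff, qBinomialCoeff, qp_succ, qp_succ, ← pow_succ', mul_div_mul_comm, mul_assoc,
    div_mul_cancel₀ _ hqk]

lemma exists_norm_qBinomialCoeff_le (hq : ‖q‖ < 1) (β : ℂ) :
    ∃ C, ∀ k, ‖qBinomialCoeff q β k‖ ≤ C := by
  have h : Tendsto (qBinomialCoeff q β) atTop (𝓝 (qpi q β / qpi q q)) :=
    (tendsto_qp_qpi hq β).div (tendsto_qp_qpi hq q) (qpi_ne_zero hq hq)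
  obtain ⟨C, hC⟩ := isBounded_iff_forall_norm_le.mp (Metric.isBounded_range_of_tendsto _ h)
  exact ⟨C, fun k => hC _ ⟨k, rfl⟩⟩

lemma summable_norm_qBinomialCoeff_mul_pow (hq : ‖q‖ < 1) (β : ℂ) {x : ℂ} (hx : ‖x‖ < 1) :
    Summable fun k : ℕ => ‖qBinomialCoeff q β k * x ^ k‖ := by
  obtain ⟨C, hC⟩ := exists_norm_qBinomialCoeff_le hq β
  refine .of_nonneg_of_le (fun k => norm_nonneg _) (fun k => ?_)
    ((summable_geometric_of_lt_one (norm_nonneg x) hx).mul_left C)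
  rw [norm_mul, norm_pow]
  exact mul_le_mul_of_nonneg_right (hC k) (by positivity)

lemma qBinomialSeries_mul_one_sub (hq : ‖q‖ < 1) (β : ℂ) {x : ℂ} (hx : ‖x‖ < 1) :
    qBinomialSeries q β x * (1 - x) = qBinomialSeries q β (q * x) * (1 - β * x) := by
  have hS := (summable_norm_qBinomialCoeff_mul_pow hq β hx).of_norm
  have hSq := (summable_norm_qBinomialCoeff_mul_pow hq β
    (norm_mul_lt_one_of_le_one_of_lt_one hq.le hx)).of_norm
  -- shifting the index in `S x - S (q x)` and using `qBinomialCoeff_succ_mul` gives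
  -- `x (S x - β S (q x))`
  have hdiff : qBinomialSeries q β x - qBinomialSeries q β (q * x)
      = x * (qBinomialSeries q β x - β * qBinomialSeries q β (q * x)) := by
    rw [qBinomialSeries, qBinomialSeries, ← hS.tsum_sub hSq, (hS.sub hSq).tsum_eq_zero_add,
      ← tsum_mul_left, ← hS.tsum_sub (hSq.mul_left β), ← tsum_mul_left]
    have hc : ∀ k : ℕ, qBinomialCoeff q β (k + 1) * x ^ (k + 1)
          - qBinomialCoeff q β (k + 1) * (q * x) ^ (k + 1)
        = x * (qBinomialCoeff q β k * x ^ k - β * (qBinomialCoeff q β k * (q * x) ^ k)) :=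
      fun k => by linear_combination x ^ (k + 1) * qBinomialCoeff_succ_mul hq β k
    simp only [pow_zero, mul_one, sub_self, zero_add]
    exact tsum_congr hc
  linear_combination hdiff

lemma qBinomialSeries_mul_qp (hq : ‖q‖ < 1) (β : ℂ) {x : ℂ} (hx : ‖x‖ < 1) (n : ℕ) :
    qBinomialSeries q β x * qp q x n = qp q (β * x) n * qBinomialSeries q β (q ^ n * x) := by
  induction n with
  | zero => simp [qp]
  | succ n ih =>
    have hqnx : ‖q ^ n * x‖ < 1 := norm_mul_lt_one_of_le_one_of_lt_one
      (by rw [norm_pow]; exact pow_le_one₀ (norm_nonneg q) hq.le) hx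
    have h := qBinomialSeries_mul_one_sub hq β hqnx
    rw [← mul_assoc, ← pow_succ'] at h
    rw [qp_succ, qp_succ, ← mul_assoc, ih]
    linear_combination qp q (β * x) n * h

lemma tendsto_qBinomialSeries_nhds_zero (hq : ‖q‖ < 1) (β : ℂ) :
    Tendsto (qBinomialSeries q β) (𝓝 0) (𝓝 1) := by
  obtain ⟨C, hC⟩ := exists_norm_qBinomialCoeff_le hq β
  have hlim := tendsto_tsum_of_dominated_convergence (𝓕 := 𝓝 (0 : ℂ))
    (f := fun x k => qBinomialCoeff q β k * x ^ k) (bound := fun k => C * (1 / 2) ^ k)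
    ((summable_geometric_two).mul_left C)
    (fun k => ((continuous_pow k).const_mul _).tendsto 0)
    (by
      filter_upwards [Metric.closedBall_mem_nhds (0 : ℂ) (by norm_num : (0 : ℝ) < 1 / 2)]
        with x hx k
      rw [mem_closedBall_zero_iff] at hx
      rw [norm_mul, norm_pow]
      exact mul_le_mul (hC k) (pow_le_pow_left₀ (norm_nonneg x) hx k) (by positivity)
        ((norm_nonneg _).trans (hC k)))
  rwa [tsum_eq_single 0 (fun k hk => by simp [zero_pow hk]), pow_zero, mul_one,
    qBinomialCoeff_zero] at hlim

theorem qBinomialSeries_mul_qpi (hq : ‖q‖ < 1) (β : ℂ) {x : ℂ} (hx : ‖x‖ < 1) :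
    qBinomialSeries q β x * qpi q x = qpi q (β * x) := by
  have hqnx : Tendsto (fun n : ℕ => q ^ n * x) atTop (𝓝 0) := by
    simpa using (tendsto_pow_atTop_nhds_zero_of_norm_lt_one hq).mul_const x
  have h := (tendsto_qp_qpi hq (β * x)).mul
    ((tendsto_qBinomialSeries_nhds_zero hq β).comp hqnx)
  rw [mul_one] at h
  exact tendsto_nhds_unique
    (((tendsto_qp_qpi hq x).const_mul _).congr (qBinomialSeries_mul_qp hq β hx)) h

theorem qBinomialSeries_eq (hq : ‖q‖ < 1) (β : ℂ) {x : ℂ} (hx : ‖x‖ < 1) :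
    qBinomialSeries q β x = qpi q (β * x) / qpi q x := by
  rw [eq_div_iff (qpi_ne_zero hq hx), qBinomialSeries_mul_qpi hq β hx]

end QBinomial

lemma Cab_mul_pow_eq_sum_range (q α β t : ℂ) (θ : ℝ) (n : ℕ) :
    Cab q α β n θ * t ^ n = ∑ k ∈ Finset.range (n + 1),
      qBinomialCoeff q α k * (t * Complex.exp (-(Complex.I * θ))) ^ k *
        (qBinomialCoeff q β (n - k) * (t * Complex.exp (Complex.I * θ)) ^ (n - k)) := by
  rw [Cab, Finset.sum_mul]
  refine Finset.sum_congr rfl fun k hk => ?_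
  have hkn : k ≤ n := Nat.lt_succ_iff.mp (Finset.mem_range.mp hk)
  have hexp : Complex.exp (Complex.I * ((n : ℂ) - 2 * k) * θ)
      = Complex.exp (-(Complex.I * θ)) ^ k * Complex.exp (Complex.I * θ) ^ (n - k) := by
    rw [← Complex.exp_nat_mul, ← Complex.exp_nat_mul, ← Complex.exp_add, Nat.cast_sub hkn]
    ring_nf
  rw [hexp, qBinomialCoeff, qBinomialCoeff, mul_pow, mul_pow, ← pow_mul_pow_sub t hkn]
  ring

lemma norm_mul_exp_I_mul_ofReal (t : ℂ) (θ : ℝ) : ‖t * Complex.exp (Complex.I * θ)‖ = ‖t‖ := by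
  simp [Complex.norm_exp]

lemma norm_mul_exp_neg_I_mul_ofReal (t : ℂ) (θ : ℝ) :
    ‖t * Complex.exp (-(Complex.I * θ))‖ = ‖t‖ := by
  simp [Complex.norm_exp]

theorem Cab_generatingFunction {q t : ℂ} (hq : ‖q‖ < 1) (ht : ‖t‖ < 1) (α β : ℂ) (θ : ℝ) :
    Summable (fun n : ℕ => ‖Cab q α β n θ * t ^ n‖) ∧
      ∑' n : ℕ, Cab q α β n θ * t ^ n =
        qpi q (α * (t * Complex.exp (-(Complex.I * θ)))) *
            qpi q (β * (t * Complex.exp (Complex.I * θ))) /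
          (qpi q (t * Complex.exp (-(Complex.I * θ))) * qpi q (t * Complex.exp (Complex.I * θ))) := by
  simp only [Cab_mul_pow_eq_sum_range]
  set u := t * Complex.exp (-(Complex.I * θ))
  set v := t * Complex.exp (Complex.I * θ)
  have hu : ‖u‖ < 1 := (norm_mul_exp_neg_I_mul_ofReal t θ).trans_lt ht
  have hv : ‖v‖ < 1 := (norm_mul_exp_I_mul_ofReal t θ).trans_lt ht
  have hf := summable_norm_qBinomialCoeff_mul_pow hq α hu
  have hg := summable_norm_qBinomialCoeff_mul_pow hq β hv
  have hsum := summable_norm_sum_mul_range_of_summable_norm hf hg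
  have hprod := tsum_mul_tsum_eq_tsum_sum_range_of_summable_norm hf hg
  refine ⟨hsum, hprod ▸ ?_⟩
  exact (congr_arg₂ (· * ·) (qBinomialSeries_eq hq α hu) (qBinomialSeries_eq hq β hv)).trans
    (div_mul_div_comm _ _ _ _)

lemma qpi_quotient_sub_mul_qpi_quotient {q u v : ℂ} (hq : ‖q‖ < 1) (hu : ‖u‖ < 1) (hv : ‖v‖ < 1)
    (β : ℂ) :
    qpi q (β * u) * qpi q (β * v) / (qpi q u * qpi q v) -
        β * (qpi q (β * (u * q)) * qpi q (β * (v * q)) / (qpi q (u * q) * qpi q (v * q))) =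
      qpi q (β * u * q) * qpi q (β * v * q) / (qpi q u * qpi q v) *
        ((1 - β) * (1 - β * (u * v))) := by
  have hu1 : 1 - u ≠ 0 := by simpa using one_sub_mul_pow_ne_zero hq.le hu 0
  have hv1 : 1 - v ≠ 0 := by simpa using one_sub_mul_pow_ne_zero hq.le hv 0
  have huq := qpi_ne_zero hq (norm_mul_lt_one_of_lt_one_of_le_one hu hq.le)
  have hvq := qpi_ne_zero hq (norm_mul_lt_one_of_lt_one_of_le_one hv hq.le)
  rw [qpi_eq_one_sub_mul_qpi hq u, qpi_eq_one_sub_mul_qpi hq v, qpi_eq_one_sub_mul_qpi hq (β * u),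
    qpi_eq_one_sub_mul_qpi hq (β * v), ← mul_assoc, ← mul_assoc]
  field_simp
  ring

theorem stmt12_general (q β t : ℂ) (hq : ‖q‖ < 1)
    (ht : ‖t‖ < 1) (θ : ℝ) :
    Summable (fun n : ℕ => ‖(1 - β * q ^ n) * Cab q β β n θ * t ^ n‖) ∧
    ∑' n : ℕ, (1 - β * q ^ n) * Cab q β β n θ * t ^ n =
      qpi q (β * t * q * Complex.exp (Complex.I * (θ : ℂ))) *
          qpi q (β * t * q * Complex.exp (-(Complex.I * (θ : ℂ)))) /
        (qpi q (t * Complex.exp (Complex.I * (θ : ℂ))) *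
          qpi q (t * Complex.exp (-(Complex.I * (θ : ℂ))))) *
        ((1 - β) * (1 - β * t ^ 2)) := by
  obtain ⟨hA, hsumA⟩ := Cab_generatingFunction hq ht β β θ
  obtain ⟨hB, hsumB⟩ :=
    Cab_generatingFunction hq (norm_mul_lt_one_of_le_one_of_lt_one hq.le ht) β β θ
  have hsplit (n : ℕ) : (1 - β * q ^ n) * Cab q β β n θ * t ^ n
      = Cab q β β n θ * t ^ n - β * (Cab q β β n θ * (q * t) ^ n) := by ring
  have hS := hA.of_norm.sub (hB.of_norm.mul_left β)
  refine ⟨summable_norm_iff.mpr (hS.congr fun n => (hsplit n).symm), ?_⟩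
  set E := Complex.exp (Complex.I * θ)
  set E' := Complex.exp (-(Complex.I * θ))
  have hEE : t * E' * (t * E) = t ^ 2 := by
    rw [mul_mul_mul_comm, ← Complex.exp_add, neg_add_cancel, Complex.exp_zero, mul_one, sq]
  have hqtE (z : ℂ) : q * t * z = t * z * q := by ring
  have hβtqE (z : ℂ) : β * t * q * z = β * (t * z) * q := by ring
  rw [tsum_congr hsplit, hA.of_norm.tsum_sub (hB.of_norm.mul_left β), tsum_mul_left, hsumA, hsumB,
    hqtE, hqtE, hβtqE, hβtqE,
    qpi_quotient_sub_mul_qpi_quotient hq ((norm_mul_exp_neg_I_mul_ofReal t θ).trans_lt ht)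
      ((norm_mul_exp_I_mul_ofReal t θ).trans_lt ht), hEE]
  ring

/-- Modified generating function for the continuous q-ultraspherical polynomials. -/
theorem stmt12 (q β t : ℂ) (hq : ‖q‖ < 1) (hβ : ‖β‖ < 1)
    (ht : ‖t‖ < 1) (θ : ℝ) :
    Summable (fun n : ℕ => ‖(1 - β * q ^ n) * Cab q β β n θ * t ^ n‖) ∧
    ∑' n : ℕ, (1 - β * q ^ n) * Cab q β β n θ * t ^ n =
      qpi q (β * t * q * Complex.exp (Complex.I * (θ : ℂ))) *
          qpi q (β * t * q * Complex.exp (-(Complex.I * (θ : ℂ)))) /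
        (qpi q (t * Complex.exp (Complex.I * (θ : ℂ))) *
          qpi q (t * Complex.exp (-(Complex.I * (θ : ℂ))))) *
        ((1 - β) * (1 - β * t ^ 2)) :=
  stmt12_general q β t hq ht θ
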